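/- arXiv:2502.00489 — 3 statements merged into one kernel-verified Lean document; each statement's English description precedes it below -/
import Mathlib

section
/- For a uniformly random permutation of [n] and any t ≤ n/2, if X is the number of cycles of length at most t, then Var(X) ≤ E[X]. -/
/-!
Write `p(x)` for the length of the cycle of `π` through `x`. A cycle of length `ℓ ≤ t` is counted
once by `X` and has `ℓ` points, so `X = ∑ₓ w(x)` with `w(x) = 1/p(x)` if `p(x) ≤ t` and `0`
otherwise. The pairs `x, y` on a common cycle contribute exactly `X` to `X²`, so
`X² = X + ∑ w(x) w(y)`, the sum running over pairs in different cycles.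

Summed over all permutations, both moments reduce to one count: for a permutation `ρ` of a finite
type `β`, every embedding `g : β ↪ α` admits exactly `|α|! / #(β ↪ α)` permutations `π` with
`π ∘ g = g ∘ ρ`, because `Perm α` acts transitively on `β ↪ α`. A point of period `ℓ` is the image
of `0` under a unique embedding `ZMod ℓ ↪ α` intertwining `(1 + ·)` with `π`, and two points in
different cycles of lengths `ℓ, ℓ'` correspond likewise to embeddings of `ZMod ℓ ⊕ ZMod ℓ'`
(they exist since `ℓ + ℓ' ≤ 2t ≤ n`). Hence `E[X] = H` and `E[X²] = H + H²` with
`H = ∑_{ℓ ≤ t} 1/ℓ`, so that in fact `Var X = E[X]`.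
-/

open Classical in
/-- The number of cycles (orbits) of `π` of size at most `t`, counted as the number
of distinct orbits `{y | π.SameCycle x y}` over elements `x` of minimal period `≤ t`. -/
noncomputable def orbitCountLe (n t : ℕ) (π : Equiv.Perm (Fin n)) : ℕ :=
  ((Finset.univ.filter (fun x : Fin n => Function.minimalPeriod (⇑π) x ≤ t)).image
    (fun x => Finset.univ.filter (fun y : Fin n => π.SameCycle x y))).card

open Equiv Function Finset
open scoped Nat

theorem Finset.card_image_eq_sum_inv_card_fiber {ι κ : Type*} [DecidableEq κ] (s : Finset ι)
    (F : ι → κ) : (#(s.image F) : ℚ) = ∑ x ∈ s, (#{y ∈ s | F y = F x} : ℚ)⁻¹ := by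
  rw [card_eq_sum_ones, Nat.cast_sum]
  refine sum_image' _ fun x hx => ?_
  have hfiber : ∀ y ∈ {y ∈ s | F y = F x}, #{z ∈ s | F z = F y} = #{y ∈ s | F y = F x} :=
    fun y hy => by rw [(mem_filter.1 hy).2]
  have hx' : x ∈ {y ∈ s | F y = F x} := mem_filter.2 ⟨hx, rfl⟩
  have hpos : (#{y ∈ s | F y = F x} : ℚ) ≠ 0 := by exact_mod_cast (card_pos.2 ⟨x, hx'⟩).ne'
  rw [sum_congr rfl fun y hy => by rw [hfiber y hy], sum_const, nsmul_eq_mul,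
    mul_inv_cancel₀ hpos, Nat.cast_one]

theorem Finset.sum_ite_zero_eq_card_filter_mul {ι R : Type*} [NonAssocSemiring R] (s : Finset ι)
    (P : ι → Prop) [DecidablePred P] (c : R) :
    ∑ i ∈ s, (if P i then c else 0) = #{i ∈ s | P i} * c := by
  rw [sum_ite, sum_const_zero, add_zero, sum_const, nsmul_eq_mul]

theorem Finset.sum_card_filter_eq_card_subtype {ι κ : Type*} [Fintype ι] [Fintype κ]
    (P : ι → κ → Prop) [∀ i, DecidablePred (P i)] :
    ∑ i, #{k | P i k} = Fintype.card {q : ι × κ // P q.1 q.2} := by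
  rw [Fintype.card_subtype, card_filter, Fintype.sum_prod_type]
  simp only [card_filter]

theorem MulAction.card_mul_card_filter_smul_eq {G X : Type*} [Group G] [Fintype G]
    [MulAction G X] [Fintype X] [DecidableEq X] [IsPretransitive G X] (a b : X) :
    Fintype.card X * #{g : G | g • a = b} = Fintype.card G := by
  have hfiber : ∀ c : X, #{g : G | g • a = c} = #{g : G | g • a = b} := fun c => by
    obtain ⟨σ, hσ⟩ := exists_smul_eq G c b
    refine card_equiv (Equiv.mulLeft σ) fun g => ?_
    simp [mul_smul, ← hσ]
  calc Fintype.card X * #{g : G | g • a = b} = ∑ c : X, #{g : G | g • a = c} := by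
        rw [sum_congr rfl fun c _ => hfiber c, sum_const, Finset.card_univ, smul_eq_mul]
    _ = Fintype.card G :=
        (card_eq_sum_card_fiberwise (f := (· • a)) fun _ _ => mem_univ _).symm

theorem Function.Semiconj.minimalPeriod_eq {α β : Type*} {g : β → α} {ρ : β → β} {π : α → α}
    (h : Semiconj g ρ π) (hg : Injective g) (b : β) :
    minimalPeriod π (g b) = minimalPeriod ρ b := by
  have hperiodic : ∀ n, IsPeriodicPt π n (g b) ↔ IsPeriodicPt ρ n b := fun n => by
    rw [IsPeriodicPt, IsFixedPt, ← (h.iterate_right n).eq, hg.eq_iff]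
    rfl
  exact Nat.dvd_antisymm ((hperiodic _).2 (isPeriodicPt_minimalPeriod ρ b)).minimalPeriod_dvd
    ((hperiodic _).1 (isPeriodicPt_minimalPeriod π (g b))).minimalPeriod_dvd

namespace Equiv.Perm

theorem sum_card_semiconj_eq_factorial {α β : Type*} [Fintype α] [DecidableEq α] [Fintype β]
    [DecidableEq β] (ρ : Perm β) (h : Fintype.card β ≤ Fintype.card α) :
    ∑ g : β ↪ α, #{π : Perm α | ∀ b, g (ρ b) = π (g b)} = (Fintype.card α)! := by
  have : MulAction.IsPretransitive (Perm α) (β ↪ α) := ⟨exists_smul_eq_embedding⟩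
  have hcard : ∀ g : β ↪ α, Fintype.card (β ↪ α) * #{π : Perm α | ∀ b, g (ρ b) = π (g b)} =
      (Fintype.card α)! := fun g => by
    rw [← Fintype.card_perm,
      ← MulAction.card_mul_card_filter_smul_eq (G := Perm α) g (ρ.toEmbedding.trans g)]
    congr 1
    refine congrArg card (filter_congr fun π _ => ?_)
    simp [Function.Embedding.ext_iff, eq_comm]
  obtain ⟨g₀⟩ : Nonempty (β ↪ α) := Function.Embedding.nonempty_of_card_le h
  rw [sum_const_nat fun g _ => Nat.eq_of_mul_eq_mul_left (Fintype.card_pos_iff.2 ⟨g₀⟩)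
    ((hcard g).trans (hcard g₀).symm), Finset.card_univ, hcard g₀]

section Rotation

variable {α : Type*} (π : Perm α) {ℓ : ℕ}

theorem sameCycle_of_iterate_eq {x y : α} {i j : ℕ} (h : (⇑π)^[i] x = (⇑π)^[j] y) :
    π.SameCycle x y := by
  rw [← sameCycle_pow_left (n := i), ← sameCycle_pow_right (n := j), ← iterate_eq_pow,
    ← iterate_eq_pow, h]

theorem iterate_apply_zero_of_semiconj {g : ZMod ℓ → α} (hg : Semiconj g (1 + ·) π) (m : ℕ) :
    (⇑π)^[m] (g 0) = g m := by
  rw [← (hg.iterate_right m).eq, add_left_iterate_apply, add_zero, nsmul_one]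

theorem minimalPeriod_apply_zero_of_semiconj {g : ZMod ℓ → α} (hg : Semiconj g (1 + ·) π)
    (hinj : Injective g) : minimalPeriod π (g 0) = ℓ := by
  rw [hg.minimalPeriod_eq hinj]
  exact ZMod.addOrderOf_one ℓ

theorem not_sameCycle_of_semiconj [Finite α] {β : Type*} {g₁ : ZMod ℓ → α} {g₂ : β → α}
    (h₁ : Semiconj g₁ (1 + ·) π) (hdisj : ∀ i j, g₁ i ≠ g₂ j) (j : β) :
    ¬π.SameCycle (g₁ 0) (g₂ j) := fun hsc => by
  obtain ⟨m, hm⟩ := hsc.exists_nat_pow_eq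
  rw [← iterate_eq_pow, iterate_apply_zero_of_semiconj π h₁] at hm
  exact hdisj _ _ hm

variable [NeZero ℓ]

theorem iterate_val_apply_zero_of_semiconj {g : ZMod ℓ → α} (hg : Semiconj g (1 + ·) π)
    (j : ZMod ℓ) : (⇑π)^[j.val] (g 0) = g j := by
  rw [iterate_apply_zero_of_semiconj π hg, ZMod.natCast_zmod_val]

variable {x : α}

def cycleEmbedding (h : minimalPeriod π x = ℓ) : ZMod ℓ ↪ α where
  toFun j := (⇑π)^[j.val] x
  inj' i j hij := ZMod.val_injective ℓ <| iterate_injOn_Iio_minimalPeriod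
    (by rw [Set.mem_Iio, h]; exact ZMod.val_lt i) (by rw [Set.mem_Iio, h]; exact ZMod.val_lt j) hij

@[simp]
theorem cycleEmbedding_apply (h : minimalPeriod π x = ℓ) (j : ZMod ℓ) :
    cycleEmbedding π h j = (⇑π)^[j.val] x := rfl

theorem semiconj_cycleEmbedding (h : minimalPeriod π x = ℓ) :
    Semiconj (cycleEmbedding π h) (1 + ·) π := fun j => by
  have hval : (1 + j).val = (j.val + 1) % ℓ := by
    rw [← ZMod.val_natCast, Nat.cast_add, ZMod.natCast_zmod_val, Nat.cast_one, add_comm]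
  have hmod := iterate_mod_minimalPeriod_eq (f := ⇑π) (x := x) (n := j.val + 1)
  rw [h] at hmod
  rw [cycleEmbedding_apply, cycleEmbedding_apply, hval, hmod, iterate_succ_apply']

end Rotation

section Finite

variable {α : Type*} [Finite α]

theorem minimalPeriod_pos (π : Perm α) (x : α) : 0 < minimalPeriod π x :=
  minimalPeriod_pos_of_mem_periodicPts (π.injective.mem_periodicPts x)

theorem SameCycle.minimalPeriod_eq {π : Perm α} {x y : α} (h : π.SameCycle x y) :
    minimalPeriod π x = minimalPeriod π y := by
  obtain ⟨m, rfl⟩ := h.exists_nat_pow_eq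
  rw [← iterate_eq_pow, minimalPeriod_apply_iterate (π.injective.mem_periodicPts x)]

end Finite

section Counting

variable {α : Type*} [Fintype α] [DecidableEq α]

theorem card_sameCycle (π : Perm α) (x : α) :
    #{y | π.SameCycle x y} = minimalPeriod π x := by
  have horbit : ({y | π.SameCycle x y} : Finset α) =
      (range (minimalPeriod π x)).image fun m => (⇑π)^[m] x := by
    ext y
    simp only [mem_filter, mem_univ, true_and, mem_image, mem_range]
    refine ⟨fun h => ?_, fun ⟨m, _, hm⟩ => sameCycle_of_iterate_eq π (j := 0) hm⟩
    obtain ⟨m, rfl⟩ := h.exists_nat_pow_eq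
    exact ⟨m % minimalPeriod π x, Nat.mod_lt _ (minimalPeriod_pos π x),
      by rw [iterate_mod_minimalPeriod_eq, iterate_eq_pow]⟩
  rw [horbit, card_image_of_injOn (by simpa using iterate_injOn_Iio_minimalPeriod), card_range]

theorem sum_card_minimalPeriod_eq_factorial (ℓ : ℕ) [NeZero ℓ] (hℓ : ℓ ≤ Fintype.card α) :
    ∑ x : α, #{π : Perm α | minimalPeriod π x = ℓ} = (Fintype.card α)! := by
  rw [sum_card_filter_eq_card_subtype (fun x (π : Perm α) => minimalPeriod π x = ℓ),
    ← sum_card_semiconj_eq_factorial (Equiv.addLeft (1 : ZMod ℓ)) (by rwa [ZMod.card]),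
    sum_card_filter_eq_card_subtype]
  exact Fintype.card_congr
    { toFun := fun q => ⟨(cycleEmbedding q.1.2 q.2, q.1.2), semiconj_cycleEmbedding q.1.2 q.2⟩
      invFun := fun q =>
        ⟨(q.1.1 0, q.1.2), minimalPeriod_apply_zero_of_semiconj _ q.2 q.1.1.injective⟩
      left_inv := fun q => by simp
      right_inv := fun q => by
        ext j
        · exact iterate_val_apply_zero_of_semiconj _ q.2 j
        · rfl }

theorem sum_card_not_sameCycle_eq_factorial (ℓ ℓ' : ℕ) [NeZero ℓ] [NeZero ℓ']
    (h : ℓ + ℓ' ≤ Fintype.card α) :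
    ∑ x : α, ∑ y : α, #{π : Perm α | ¬π.SameCycle x y ∧ minimalPeriod π x = ℓ ∧
      minimalPeriod π y = ℓ'} = (Fintype.card α)! := by
  rw [← Fintype.sum_prod_type', sum_card_filter_eq_card_subtype (fun (xy : α × α) (π : Perm α) =>
      ¬π.SameCycle xy.1 xy.2 ∧ minimalPeriod π xy.1 = ℓ ∧ minimalPeriod π xy.2 = ℓ'),
    ← sum_card_semiconj_eq_factorial
      (Equiv.sumCongr (Equiv.addLeft (1 : ZMod ℓ)) (Equiv.addLeft (1 : ZMod ℓ')))
      (by rwa [Fintype.card_sum, ZMod.card, ZMod.card]),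
    sum_card_filter_eq_card_subtype]
  refine Fintype.card_congr
    { toFun := fun q =>
        ⟨(⟨Sum.elim (cycleEmbedding q.1.2 q.2.2.1) (cycleEmbedding q.1.2 q.2.2.2),
          (cycleEmbedding q.1.2 q.2.2.1).injective.sumElim (cycleEmbedding q.1.2 q.2.2.2).injective
            fun _ _ hij => q.2.1 (sameCycle_of_iterate_eq q.1.2 hij)⟩, q.1.2), fun
          | .inl i => semiconj_cycleEmbedding q.1.2 q.2.2.1 i
          | .inr j => semiconj_cycleEmbedding q.1.2 q.2.2.2 j⟩
      invFun := fun q => ⟨((q.1.1 (.inl 0), q.1.1 (.inr 0)), q.1.2),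
        not_sameCycle_of_semiconj _ (g₁ := q.1.1 ∘ .inl) (g₂ := q.1.1 ∘ .inr)
          (fun i => q.2 (.inl i)) (fun _ _ h => Sum.inl_ne_inr (q.1.1.injective h)) 0,
        minimalPeriod_apply_zero_of_semiconj _ (g := q.1.1 ∘ .inl) (fun i => q.2 (.inl i))
          (q.1.1.injective.comp Sum.inl_injective),
        minimalPeriod_apply_zero_of_semiconj _ (g := q.1.1 ∘ .inr) (fun j => q.2 (.inr j))
          (q.1.1.injective.comp Sum.inr_injective)⟩
      left_inv := fun q => by simp
      right_inv := fun q => Subtype.ext <| Prod.ext (Function.Embedding.ext fun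
        | .inl i => iterate_val_apply_zero_of_semiconj _ (g := q.1.1 ∘ .inl)
            (fun i => q.2 (.inl i)) i
        | .inr j => iterate_val_apply_zero_of_semiconj _ (g := q.1.1 ∘ .inr)
            (fun j => q.2 (.inr j)) j) rfl }

theorem card_fiber_sameCycle_finset (t : ℕ) (π : Perm α) {x : α} (hx : minimalPeriod π x ≤ t) :
    #{y ∈ ({y | minimalPeriod π y ≤ t} : Finset α) |
      ({z | π.SameCycle y z} : Finset α) = ({z | π.SameCycle x z} : Finset α)} =
      minimalPeriod π x := by
  rw [← card_sameCycle]
  congr 1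
  ext y
  simp only [mem_filter, mem_univ, true_and]
  refine ⟨fun ⟨_, hy⟩ => ?_, fun h => ⟨h.minimalPeriod_eq ▸ hx, ?_⟩⟩
  · have hyy : y ∈ ({z | π.SameCycle y z} : Finset α) := mem_filter.2 ⟨mem_univ y, .refl π y⟩
    simpa [hy] using hyy
  · ext z
    simp only [mem_filter, mem_univ, true_and]
    exact ⟨h.trans, h.symm.trans⟩

end Counting

section Weight

noncomputable def cycleWeight {α : Type*} (t : ℕ) (π : Perm α) (x : α) : ℚ :=
  if minimalPeriod π x ≤ t then (minimalPeriod π x : ℚ)⁻¹ else 0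

variable {α : Type*} [Fintype α] (t : ℕ) (π : Perm α)

theorem cycleWeight_eq_of_sameCycle {x y : α} (h : π.SameCycle x y) :
    cycleWeight t π x = cycleWeight t π y := by
  rw [cycleWeight, cycleWeight, h.minimalPeriod_eq]

theorem cycleWeight_eq_sum_Icc (x : α) :
    cycleWeight t π x = ∑ ℓ ∈ Icc 1 t, if minimalPeriod π x = ℓ then (ℓ : ℚ)⁻¹ else 0 := by
  rw [sum_ite_eq, cycleWeight]
  exact if_congr ⟨fun h => mem_Icc.2 ⟨minimalPeriod_pos π x, h⟩, fun h => (mem_Icc.1 h).2⟩ rfl rfl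

variable [DecidableEq α]

theorem sum_sameCycle_cycleWeight (x : α) :
    ∑ y, (if π.SameCycle x y then cycleWeight t π y else 0) =
      if minimalPeriod π x ≤ t then 1 else 0 := by
  rw [← sum_filter, sum_congr rfl fun y hy =>
      (cycleWeight_eq_of_sameCycle t π (mem_filter.1 hy).2).symm,
    sum_const, card_sameCycle, nsmul_eq_mul, cycleWeight]
  have hpos : (minimalPeriod π x : ℚ) ≠ 0 := by exact_mod_cast (minimalPeriod_pos π x).ne'
  split_ifs
  · exact mul_inv_cancel₀ hpos
  · exact mul_zero _

theorem sq_sum_cycleWeight :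
    (∑ x, cycleWeight t π x) ^ 2 = ∑ x, cycleWeight t π x +
      ∑ x, ∑ y, if π.SameCycle x y then 0 else cycleWeight t π x * cycleWeight t π y := by
  rw [sq, Fintype.sum_mul_sum, ← sum_add_distrib]
  refine sum_congr rfl fun x _ => ?_
  have hsplit : ∀ y, cycleWeight t π x * cycleWeight t π y =
      cycleWeight t π x * (if π.SameCycle x y then cycleWeight t π y else 0) +
        if π.SameCycle x y then 0 else cycleWeight t π x * cycleWeight t π y := fun y => by
    split_ifs <;> ring
  rw [sum_congr rfl fun y _ => hsplit y, sum_add_distrib, ← mul_sum, sum_sameCycle_cycleWeight]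
  congr 1
  rw [cycleWeight]
  split_ifs <;> simp

theorem ite_sameCycle_cycleWeight_mul_eq_sum (x y : α) :
    (if π.SameCycle x y then 0 else cycleWeight t π x * cycleWeight t π y) =
      ∑ ℓ ∈ Icc 1 t, ∑ ℓ' ∈ Icc 1 t, if ¬π.SameCycle x y ∧ minimalPeriod π x = ℓ ∧
        minimalPeriod π y = ℓ' then (ℓ : ℚ)⁻¹ * (ℓ' : ℚ)⁻¹ else 0 := by
  rw [cycleWeight_eq_sum_Icc t π x, cycleWeight_eq_sum_Icc t π y, sum_mul_sum]
  by_cases hxy : π.SameCycle x y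
  · simp [hxy]
  · rw [if_neg hxy]
    refine sum_congr rfl fun ℓ _ => sum_congr rfl fun ℓ' _ => ?_
    by_cases hx : minimalPeriod π x = ℓ <;> by_cases hy : minimalPeriod π y = ℓ' <;> simp [*]

end Weight

section Moments

variable {α : Type*} [Fintype α] [DecidableEq α] (t : ℕ)

theorem sum_sum_cycleWeight (h : t ≤ Fintype.card α) :
    ∑ π : Perm α, ∑ x, cycleWeight t π x = (Fintype.card α)! * ∑ ℓ ∈ Icc 1 t, (ℓ : ℚ)⁻¹ := by
  simp only [cycleWeight_eq_sum_Icc]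
  rw [sum_comm]
  simp only [sum_comm (s := (univ : Finset (Perm α))), sum_ite_zero_eq_card_filter_mul]
  rw [sum_comm, mul_sum]
  refine sum_congr rfl fun ℓ hℓ => ?_
  obtain ⟨hℓ1, hℓt⟩ := mem_Icc.1 hℓ
  have : NeZero ℓ := ⟨by omega⟩
  rw [← sum_mul, ← Nat.cast_sum, sum_card_minimalPeriod_eq_factorial ℓ (by omega)]

theorem sum_sum_sum_ite_sameCycle (h : 2 * t ≤ Fintype.card α) :
    ∑ π : Perm α, ∑ x, ∑ y,
      (if π.SameCycle x y then 0 else cycleWeight t π x * cycleWeight t π y) =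
        (Fintype.card α)! * (∑ ℓ ∈ Icc 1 t, (ℓ : ℚ)⁻¹) ^ 2 := by
  simp only [ite_sameCycle_cycleWeight_mul_eq_sum]
  rw [sum_comm]
  simp only [sum_comm (s := (univ : Finset (Perm α))), sum_ite_zero_eq_card_filter_mul]
  rw [← Fintype.sum_prod_type', sum_comm, sq, sum_mul_sum, mul_sum]
  refine sum_congr rfl fun ℓ hℓ => ?_
  rw [sum_comm, mul_sum]
  refine sum_congr rfl fun ℓ' hℓ' => ?_
  obtain ⟨hℓ1, hℓt⟩ := mem_Icc.1 hℓ
  obtain ⟨hℓ'1, hℓ't⟩ := mem_Icc.1 hℓ'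
  have : NeZero ℓ := ⟨by omega⟩
  have : NeZero ℓ' := ⟨by omega⟩
  have hcount := sum_card_not_sameCycle_eq_factorial (α := α) ℓ ℓ' (by omega)
  rw [← Fintype.sum_prod_type'] at hcount
  rw [← sum_mul, ← Nat.cast_sum, hcount]

end Moments

end Equiv.Perm

open Equiv.Perm

theorem orbitCountLe_eq_sum_cycleWeight (n t : ℕ) (π : Perm (Fin n)) :
    (orbitCountLe n t π : ℚ) = ∑ x, cycleWeight t π x := by
  simp only [orbitCountLe, card_image_eq_sum_inv_card_fiber, cycleWeight, ← sum_filter]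
  exact sum_congr rfl fun x hx => by rw [card_fiber_sameCycle_finset t π (mem_filter.1 hx).2]

/-- For `X` the number of cycles of length at most `t ≤ n/2` in a uniformly random
permutation of `[n]`, `Var(X) ≤ E[X]`. -/
theorem stmt6 (n t : ℕ) (ht : 2 * t ≤ n) :
    (∑ π : Equiv.Perm (Fin n), (orbitCountLe n t π : ℚ) ^ 2) / (n.factorial : ℚ)
      - ((∑ π : Equiv.Perm (Fin n), (orbitCountLe n t π : ℚ)) / (n.factorial : ℚ)) ^ 2
      ≤ (∑ π : Equiv.Perm (Fin n), (orbitCountLe n t π : ℚ)) / (n.factorial : ℚ) := by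
  set H := ∑ ℓ ∈ Icc 1 t, (ℓ : ℚ)⁻¹
  have hfirst : ∑ π : Perm (Fin n), (orbitCountLe n t π : ℚ) = n ! * H := by
    simp only [orbitCountLe_eq_sum_cycleWeight]
    rw [sum_sum_cycleWeight t (by rw [Fintype.card_fin]; omega), Fintype.card_fin]
  have hsecond : ∑ π : Perm (Fin n), (orbitCountLe n t π : ℚ) ^ 2 = n ! * H + n ! * H ^ 2 := by
    simp only [orbitCountLe_eq_sum_cycleWeight, sq_sum_cycleWeight, sum_add_distrib]
    rw [sum_sum_cycleWeight t (by rw [Fintype.card_fin]; omega),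
      sum_sum_sum_ite_sameCycle t (by rwa [Fintype.card_fin]), Fintype.card_fin]
  have hn : (n ! : ℚ) ≠ 0 := by exact_mod_cast n.factorial_ne_zero
  rw [hfirst, hsecond, add_div, mul_div_cancel_left₀ _ hn, mul_div_cancel_left₀ _ hn]
  linarith
end

section
/- Let v₁, …, vₙ be distinct vertices of a graph H in a fixed linear order, and suppose u₁ < … < u_ℓ is a special sequence, meaning u_i u_{i+1}⁺ ∈ E(H) for all i ∈ [ℓ−1], where w⁺ denotes the successor of w in the order. If P = v₁v₂…vₙ is a path of H (consecutive vertices in the order are adjacent) with u₁ = v₁ and u_ℓ = vₙ, then H contains a Hamiltonian path on {v₁,…,vₙ} from u_ℓ⁻ = v_{n−1} to u_ℓ = vₙ. -/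
/-!
Index the path as `0, …, n-1` and write `c 0 < … < c (ℓ-1)` for the special indices. For every
`k` and every `m > c k`, the set `{0, …, m}` has a Hamiltonian path from `c k` to `m`. The one
for `k + 1` and `m` comes from the one for `k` and `c (k+1)`: reverse it, jump along the chord
`c k ~ c (k+1) + 1` and walk up the path to `m`. The last or the second to last chord gives a
`k` with `c k ~ n-1` and, unless `k = 0`, `c k < n-2`; reversing the path of `{0, …, n-2}` from
`c k` to `n-2` and appending `n-1` finishes the proof.
-/

open List

theorem SimpleGraph.exists_isPath_support_eq_of_isChain {V : Type*} {G : SimpleGraph V}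
    {l : List V} {a b : V} (hchain : l.IsChain G.Adj) (hnodup : l.Nodup) (ha : l.head? = some a)
    (hb : l.getLast? = some b) :
    ∃ p : G.Walk a b, p.IsPath ∧ p.support = l := by
  have hne : l ≠ [] := by rintro rfl; simp at ha
  refine ⟨(Walk.ofSupport l hne hchain).copy ((head_eq_iff_head?_eq_some hne).2 ha)
    ((getLast_eq_iff_getLast?_eq_some hne).2 hb), ?_, ?_⟩
  · rw [Walk.isPath_def, Walk.support_copy, Walk.support_ofSupport]
    exact hnodup
  · rw [Walk.support_copy, Walk.support_ofSupport]

theorem List.isChain_range'_of_forall {r : ℕ → ℕ → Prop} {s n : ℕ}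
    (h : ∀ j, s ≤ j → j + 1 < s + n → r j (j + 1)) : (range' s n).IsChain r :=
  (isChain_range' s n 1).imp_of_mem_imp fun i j hi hj hij => by
    simp only [mem_range'_1] at hi hj
    exact hij ▸ h i hi.1 (hij ▸ hj.2)

structure IsHamiltonianList (r : ℕ → ℕ → Prop) (n a b : ℕ) (L : List ℕ) : Prop where
  isChain : L.IsChain r
  perm : L ~ range n
  head? : L.head? = some a
  getLast? : L.getLast? = some b

section Zigzag

variable {r : ℕ → ℕ → Prop} [Std.Symm r]

theorem IsHamiltonianList.reverse_append_range' {L : List ℕ} {p a m : ℕ}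
    (hL : IsHamiltonianList r (a + 1) p a L) (hjump : r p (a + 1)) (ham : a < m)
    (hstep : ∀ j, a < j → j < m → r j (j + 1)) :
    IsHamiltonianList r (m + 1) a m (L.reverse ++ range' (a + 1) (m - a)) where
  isChain := by
    refine IsChain.append (isChain_reverse.2 (hL.isChain.imp fun _ _ h => symm h))
      (isChain_range'_of_forall fun j hj hjm => hstep j hj (by omega)) ?_
    simp only [getLast?_reverse, hL.head?, head?_range', Option.mem_def, Option.some.injEq,
      if_neg (show m - a ≠ 0 by omega)]
    rintro _ rfl _ rfl
    exact hjump
  perm := by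
    rw [range_eq_range', ← show a + 1 + (m - a) = m + 1 by omega, ← range'_append_1,
      zero_add, ← range_eq_range']
    exact ((reverse_perm L).trans hL.perm).append_right _
  head? := by rw [head?_append, head?_reverse, hL.getLast?, Option.some_or]
  getLast? := by
    rw [getLast?_append, getLast?_range', if_neg (show m - a ≠ 0 by omega), Option.some_or]
    congr 1
    omega

theorem exists_isHamiltonianList_zigzag {c : ℕ → ℕ} (hc0 : c 0 = 0) :
    ∀ {k m : ℕ}, (∀ i < k, c i < c (i + 1)) → (∀ i < k, r (c i) (c (i + 1) + 1)) →
      (∀ j < m, r j (j + 1)) → (c k < m ∨ k = 0) →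
      ∃ L, IsHamiltonianList r (m + 1) (c k) m L
  | 0, m, _, _, hstep, _ =>
    ⟨range (m + 1), ⟨(isChain_range_succ r m).2 hstep, Perm.refl _,
      by simp [head?_range, hc0], by simp [getLast?_range]⟩⟩
  | k + 1, m, hmono, hchord, hstep, hm => by
    have hkm : c (k + 1) < m := by omega
    obtain ⟨L, hL⟩ := exists_isHamiltonianList_zigzag hc0 (k := k) (m := c (k + 1))
      (fun i hi => hmono i (by omega)) (fun i hi => hchord i (by omega))
      (fun j hj => hstep j (by omega)) (Or.inl (hmono k (by omega)))
    exact ⟨_, hL.reverse_append_range' (hchord k (by omega)) hkm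
      fun j _ hj => hstep j hj⟩

end Zigzag

theorem exists_chord_to_last {r : ℕ → ℕ → Prop} {c : ℕ → ℕ} {n ℓ : ℕ} (hℓ : 2 ≤ ℓ)
    (hmono : StrictMonoOn c (Set.Iio ℓ)) (hclast : c (ℓ - 1) = n - 1)
    (hchord : ∀ i, i + 1 < ℓ → r (c i) (min (c (i + 1) + 1) (n - 1))) :
    ∃ k, k + 2 ≤ ℓ ∧ (c k < n - 2 ∨ k = 0) ∧ r (c k) (n - 1) := by
  have hlt : ∀ i, i + 1 < ℓ → c i < c (i + 1) := fun i hi =>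
    hmono (Set.mem_Iio.2 (by omega)) (Set.mem_Iio.2 hi) (by omega)
  have hlast := hlt (ℓ - 2) (by omega)
  rw [show ℓ - 2 + 1 = ℓ - 1 by omega, hclast] at hlast
  by_cases h : c (ℓ - 2) < n - 2 ∨ ℓ = 2
  · refine ⟨ℓ - 2, by omega, by omega, ?_⟩
    simpa [show ℓ - 2 + 1 = ℓ - 1 by omega, hclast] using hchord (ℓ - 2) (by omega)
  · have hsecond := hlt (ℓ - 3) (by omega)
    rw [show ℓ - 3 + 1 = ℓ - 2 by omega] at hsecond
    refine ⟨ℓ - 3, by omega, by omega, ?_⟩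
    have := hchord (ℓ - 3) (by omega)
    rwa [show ℓ - 3 + 1 = ℓ - 2 by omega, show c (ℓ - 2) = n - 2 by omega,
      show min (n - 2 + 1) (n - 1) = n - 1 by omega] at this

theorem IsHamiltonianList.exists_isPath {V : Type*} {G : SimpleGraph V} {v : ℕ → V}
    {n a b : ℕ} {L : List ℕ} (hv : Set.InjOn v (Set.Iio n))
    (hL : IsHamiltonianList (fun i j => G.Adj (v i) (v j)) n a b L) :
    ∃ p : G.Walk (v a) (v b), p.IsPath ∧ {x | x ∈ p.support} = {x | ∃ j < n, v j = x} := by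
  have hmem : ∀ j, j ∈ L ↔ j < n := fun j => hL.perm.mem_iff.trans mem_range
  obtain ⟨p, hp, hsupp⟩ := SimpleGraph.exists_isPath_support_eq_of_isChain (l := L.map v)
    ((isChain_map v).2 hL.isChain)
    ((hL.perm.nodup_iff.2 nodup_range).map_on fun i hi j hj =>
      hv ((hmem i).1 hi) ((hmem j).1 hj))
    (by rw [head?_map, hL.head?]; rfl) (by rw [getLast?_map, hL.getLast?]; rfl)
  refine ⟨p, hp, ?_⟩
  ext x
  simp only [Set.mem_ofPred_eq, hsupp, mem_map, hmem]

/-- Let `v 0, …, v (n-1)` be distinct vertices of `H` forming a path in this order, and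
let `c 0 < … < c (ℓ-1)` be the indices of a special sequence: `v (c 0) = v 0`,
`v (c (ℓ-1)) = v (n-1)`, and for each `i`, `v (c i)` is adjacent to the successor of
`v (c (i+1))` in the order (successor saturating at the last vertex).  Then `H` contains
a Hamiltonian path on `{v 0, …, v (n-1)}` from `v (n-2)` to `v (n-1)`. -/
theorem stmt14 {V : Type*} (H : SimpleGraph V) (n ℓ : ℕ) (hn : 2 ≤ n) (hℓ : 2 ≤ ℓ)
    (v : ℕ → V) (hinj : ∀ j < n, ∀ k < n, v j = v k → j = k)
    (hpath : ∀ j, j + 1 < n → H.Adj (v j) (v (j + 1)))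
    (c : ℕ → ℕ) (hmono : StrictMonoOn c (Set.Iio ℓ)) (hc0 : c 0 = 0)
    (hclast : c (ℓ - 1) = n - 1)
    (hchord : ∀ i, i + 1 < ℓ → H.Adj (v (c i)) (v (min (c (i + 1) + 1) (n - 1)))) :
    ∃ p : H.Walk (v (n - 2)) (v (n - 1)), p.IsPath ∧
      {x | x ∈ p.support} = {x | ∃ j < n, v j = x} := by
  set r : ℕ → ℕ → Prop := fun i j => H.Adj (v i) (v j)
  have : Std.Symm r := ⟨fun _ _ h => h.symm⟩
  obtain ⟨k, hkℓ, hk, hlast⟩ := exists_chord_to_last (r := r) hℓ hmono hclast hchord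
  have hlt : ∀ i < k, c i < c (i + 1) := fun i hi =>
    hmono (Set.mem_Iio.2 (by omega)) (Set.mem_Iio.2 (by omega)) (by omega)
  have hchord' : ∀ i < k, r (c i) (c (i + 1) + 1) := fun i hi => by
    have : c (i + 1) ≤ c k :=
      hmono.monotoneOn (Set.mem_Iio.2 (by omega)) (Set.mem_Iio.2 (by omega)) (by omega)
    have := hchord i (by omega)
    rwa [show min (c (i + 1) + 1) (n - 1) = c (i + 1) + 1 by omega] at this
  obtain ⟨L, hL⟩ := exists_isHamiltonianList_zigzag (m := n - 2) hc0 hlt hchord'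
    (fun j hj => hpath j (by omega)) hk
  have hfinal := hL.reverse_append_range' (m := n - 1)
    (by simpa [r, show n - 2 + 1 = n - 1 by omega] using hlast) (by omega)
    fun _ _ _ => by omega
  rw [show n - 1 + 1 = n by omega] at hfinal
  exact hfinal.exists_isPath fun i hi j hj => hinj i hi j hj
end

section
/- Every regular graph of even degree contains a spanning subgraph that is 2-regular (a 2-factor). -/
/-!
Petersen's argument. Pairing up the darts leaving each vertex (possible since degrees are even)
and always leaving a vertex along the partner of the dart one entered by splits the edges into
closed trails; orienting every trail consistently makes in- and out-degree equal, hence both `k`.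
The bipartite multigraph joining the out-copy of `v` to the in-copy of `w` for every arc `v → w`
is then `k`-regular, so Hall's theorem gives a permutation `f` with an arc `v → f v` for all `v`.
An edge carries only one arc, so `f` has no fixed points and no 2-cycles, and the edges
`{v, f v}` form a 2-factor.
-/

open Finset Function

theorem exists_involutive_ne_of_even_card {α : Type*} [Finite α] (h : Even (Nat.card α)) :
    ∃ φ : α → α, Involutive φ ∧ ∀ a, φ a ≠ a := by
  obtain ⟨m, hm⟩ := h
  let e := Finite.equivFin α
  refine ⟨fun a => e.symm (e a).rev, fun a => by simp, fun a ha => ?_⟩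
  have := congrArg (fun a => (e a : ℕ)) ha
  simp only [Equiv.apply_symm_apply, Fin.val_rev] at this
  omega

theorem exists_involutive_ne_of_even_card_fiber {α β : Type*} (c : α → β)
    [∀ b, Finite {a // c a = b}] (h : ∀ b, Even (Nat.card {a // c a = b})) :
    ∃ φ : α → α, Involutive φ ∧ (∀ a, φ a ≠ a) ∧ ∀ a, c (φ a) = c a := by
  choose ψ hψ hψne using fun b => exists_involutive_ne_of_even_card (h b)
  let e := Equiv.sigmaFiberEquiv c
  let Ψ : (Σ b, {a // c a = b}) → (Σ b, {a // c a = b}) := fun x => ⟨x.1, ψ x.1 x.2⟩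
  refine ⟨fun a => e (Ψ (e.symm a)), fun a => ?_, fun a ha => ?_, fun a => (Ψ (e.symm a)).2.2⟩
  · simp [Ψ, hψ _ _]
  · have := congrArg e.symm ha
    simp only [Equiv.symm_apply_apply] at this
    exact hψne _ _ (eq_of_heq (Sigma.ext_iff.1 this).2)

namespace Equiv.Perm

variable {α : Type*} {Φ ρ : Perm α}

theorem apply_zpow_mul_apply_of_involutive (hΦ : Involutive Φ) (hρ : Involutive ρ) (n : ℤ)
    (x : α) : ρ (((Φ * ρ) ^ n) x) = ((Φ * ρ) ^ (-n)) (ρ x) := by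
  have hconj : ρ * (Φ * ρ) * ρ⁻¹ = (Φ * ρ)⁻¹ := by
    conv_rhs => rw [mul_inv_rev, inv_def, inv_def, Involutive.symm_eq_self_of_involutive _ hΦ,
      Involutive.symm_eq_self_of_involutive _ hρ]
    group
  rw [zpow_neg, ← inv_zpow, ← hconj, conj_zpow]
  simp

theorem SameCycle.apply_of_involutive (hΦ : Involutive Φ) (hρ : Involutive ρ) {x y : α}
    (h : (Φ * ρ).SameCycle x y) : (Φ * ρ).SameCycle (ρ x) (ρ y) := by
  obtain ⟨n, rfl⟩ := h
  exact ⟨-n, (apply_zpow_mul_apply_of_involutive hΦ hρ n x).symm⟩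

/-- If `(Φ * ρ) ^ m` sent `x` to `ρ x`, then `ρ` would fix `(Φ * ρ) ^ (m / 2) x` for even `m`,
and `Φ` would fix `ρ ((Φ * ρ) ^ ((m - 1) / 2) x)` for odd `m`. -/
theorem not_sameCycle_apply_self_of_involutive (hΦ : Involutive Φ) (hρ : Involutive ρ)
    (hΦne : ∀ x, Φ x ≠ x) (hρne : ∀ x, ρ x ≠ x) (x : α) : ¬(Φ * ρ).SameCycle x (ρ x) := by
  rintro ⟨m, hm⟩
  set σ := Φ * ρ
  have hσ : ∀ n : ℤ, ρ ((σ ^ n) x) = (σ ^ (m - n)) x := fun n => by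
    rw [apply_zpow_mul_apply_of_involutive hΦ hρ, ← hm, ← mul_apply, ← zpow_add, neg_add_eq_sub]
  obtain ⟨j, rfl | rfl⟩ := Int.even_or_odd' m
  · exact hρne _ ((hσ j).trans (by ring_nf))
  · refine hΦne (ρ ((σ ^ j) x)) (hρ.injective ?_)
    rw [hρ, show Φ (ρ ((σ ^ j) x)) = (σ ^ (1 + j)) x by rw [zpow_one_add, mul_apply]; rfl, hσ]
    ring_nf

end Equiv.Perm

namespace Function.Involutive

variable {α : Type*} {φ ρ : α → α}

theorem exists_set_apply_mem_iff_notMem (hφ : Involutive φ) (hne : ∀ a, φ a ≠ a) :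
    ∃ S : Set α, ∀ a, φ a ∈ S ↔ a ∉ S := by
  let _ := IsWellOrder.linearOrder (α := α) WellOrderingRel
  refine ⟨{a | a < φ a}, fun a => ?_⟩
  simp only [Set.mem_ofPred_eq, hφ a, not_lt]
  exact (hne a).le_iff_lt.symm

/-- `S` is a union of cycles of `φ ∘ ρ`: one out of each pair of cycles exchanged by `ρ`. -/
theorem exists_common_set_apply_mem_iff_notMem (hφ : Involutive φ) (hρ : Involutive ρ)
    (hφne : ∀ a, φ a ≠ a) (hρne : ∀ a, ρ a ≠ a) :
    ∃ S : Set α, (∀ a, φ a ∈ S ↔ a ∉ S) ∧ ∀ a, ρ a ∈ S ↔ a ∉ S := by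
  let r := Equiv.Perm.SameCycle.setoid (hφ.toPerm * hρ.toPerm)
  let ρq : Quotient r → Quotient r := Quotient.map ρ fun _ _ h => h.apply_of_involutive hφ hρ
  have hρq : Involutive ρq := Quotient.ind fun a => congrArg _ (hρ a)
  have hρqne : ∀ q, ρq q ≠ q := Quotient.ind fun a h =>
    Equiv.Perm.not_sameCycle_apply_self_of_involutive hφ hρ hφne hρne a (Quotient.exact h).symm
  obtain ⟨S, hS⟩ := hρq.exists_set_apply_mem_iff_notMem hρqne
  have hφρ : ∀ a, (⟦φ a⟧ : Quotient r) = ⟦ρ a⟧ := fun a =>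
    Quotient.sound (Equiv.Perm.SameCycle.symm ⟨1, by simp [hρ a]⟩)
  refine ⟨{a | ⟦a⟧ ∈ S}, fun a => ?_, fun a => hS ⟦a⟧⟩
  simp only [Set.mem_ofPred_eq, hφρ]
  exact hS ⟦a⟧

end Function.Involutive

theorem exists_injective_of_card_fiber_le {ι α β : Type*} [DecidableEq α] [DecidableEq β]
    (E : Finset ι) (s : ι → α) (t : ι → β) {k : ℕ} (hk : k ≠ 0)
    (hs : ∀ a, k ≤ #{e ∈ E | s e = a}) (ht : ∀ b, #{e ∈ E | t e = b} ≤ k) :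
    ∃ f : α → β, Injective f ∧ ∀ a, ∃ e ∈ E, s e = a ∧ t e = f a := by
  let N : α → Finset β := fun a => {e ∈ E | s e = a}.image t
  have hall : ∀ A : Finset α, #A ≤ #(A.biUnion N) := fun A => by
    refine Nat.le_of_mul_le_mul_left ?_ (Nat.pos_of_ne_zero hk)
    calc k * #A = #A • k := by rw [smul_eq_mul, mul_comm]
      _ ≤ ∑ a ∈ A, #{e ∈ E | s e = a} := card_nsmul_le_sum _ _ _ fun a _ => hs a
      _ = #{e ∈ E | s e ∈ A} := sum_card_fiberwise_eq_card_filter _ _ _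
      _ ≤ #{e ∈ E | t e ∈ A.biUnion N} := by
        refine card_le_card fun e he => ?_
        simp only [mem_filter, mem_biUnion, mem_image, N] at he ⊢
        exact ⟨he.1, s e, he.2, e, ⟨he.1, rfl⟩, rfl⟩
      _ = ∑ b ∈ A.biUnion N, #{e ∈ E | t e = b} := (sum_card_fiberwise_eq_card_filter _ _ _).symm
      _ ≤ #(A.biUnion N) • k := sum_le_card_nsmul _ _ _ fun b _ => ht b
      _ = k * #(A.biUnion N) := by rw [smul_eq_mul, mul_comm]
  obtain ⟨f, hf, hfN⟩ := (all_card_le_biUnion_card_iff_exists_injective N).1 hall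
  refine ⟨f, hf, fun a => ?_⟩
  obtain ⟨e, he, hte⟩ := mem_image.1 (hfN a)
  exact ⟨e, (mem_filter.1 he).1, (mem_filter.1 he).2, hte⟩

namespace SimpleGraph

theorem card_neighborSet_fromRel_perm_eq_two {V : Type*} (π : Equiv.Perm V)
    (hπ : ∀ v, π (π v) ≠ v) (v : V) :
    Nat.card ((fromRel fun v w => π v = w).neighborSet v) = 2 := by
  have hfix : ∀ u, π u ≠ u := fun u h => hπ u (by rw [h, h])
  have hne : π v ≠ π.symm v := fun h => hπ v (by rw [h, Equiv.apply_symm_apply])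
  have : (fromRel fun v w => π v = w).neighborSet v = {π v, π.symm v} := by
    ext w
    simp only [mem_neighborSet, fromRel_adj, Set.mem_insert_iff, Set.mem_singleton_iff,
      Equiv.eq_symm_apply]
    constructor
    · rintro ⟨-, h | h⟩
      exacts [Or.inl h.symm, Or.inr h]
    · rintro (rfl | rfl)
      exacts [⟨(hfix v).symm, Or.inl rfl⟩, ⟨fun h => hfix w h, Or.inr rfl⟩]
  rw [this, Nat.card_coe_set_eq, Set.ncard_pair hne]

variable {V : Type*} [Fintype V] [DecidableEq V] {G : SimpleGraph V} [DecidableRel G.Adj]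

theorem exists_balanced_orientation (h : ∀ v, Even (G.degree v)) :
    ∃ D : Finset G.Dart, (∀ d, d.symm ∈ D ↔ d ∉ D) ∧
      ∀ v, #{d ∈ D | d.snd = v} = #{d ∈ D | d.fst = v} := by
  classical
  obtain ⟨Φ, hΦ, hΦne, hΦfst⟩ :=
    exists_involutive_ne_of_even_card_fiber (fun d : G.Dart => d.fst) fun v => by
      rw [Nat.card_eq_fintype_card, Fintype.card_subtype, dart_fst_fiber_card_eq_degree]
      exact h v
  obtain ⟨S, hΦS, hsymmS⟩ := hΦ.exists_common_set_apply_mem_iff_notMem Dart.symm_involutive hΦne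
    fun d => d.symm_ne
  refine ⟨S.toFinset, fun d => by simpa using hsymmS d, fun v => ?_⟩
  exact card_equiv (Dart.symm_involutive.toPerm.trans hΦ.toPerm) fun d => by
    simp [hΦS, hsymmS, hΦfst]

theorem card_filter_fst_add_card_filter_snd {D : Finset G.Dart} (hD : ∀ d, d.symm ∈ D ↔ d ∉ D)
    (v : V) : #{d ∈ D | d.fst = v} + #{d ∈ D | d.snd = v} = G.degree v := by
  have : #{d ∈ D | d.snd = v} = #{d ∈ Dᶜ | d.fst = v} :=
    card_equiv Dart.symm_involutive.toPerm fun d => by simp [hD]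
  rw [this, ← dart_fst_fiber_card_eq_degree,
    ← card_filter_add_card_filter_not (s := {d | d.fst = v}) (p := (· ∈ D))]
  congr 2 <;> ext d <;> simp [and_comm]

end SimpleGraph

/-- Every regular graph of even degree `2k` (with `k ≥ 1`) contains a spanning
`2`-regular subgraph (a `2`-factor). -/
theorem stmt16 {V : Type*} [Fintype V] [DecidableEq V] (G : SimpleGraph V)
    [DecidableRel G.Adj] (k : ℕ) (hk : 1 ≤ k) (hreg : G.IsRegularOfDegree (2 * k)) :
    ∃ H : SimpleGraph V, H ≤ G ∧ ∀ v, Nat.card (H.neighborSet v) = 2 := by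
  obtain ⟨D, hD, hbal⟩ := SimpleGraph.exists_balanced_orientation fun v => hreg v ▸ even_two_mul k
  have hout : ∀ v, #{d ∈ D | d.fst = v} = k := fun v => by
    have := SimpleGraph.card_filter_fst_add_card_filter_snd hD v
    rw [hreg v, hbal v] at this
    omega
  obtain ⟨f, hf, hfD⟩ := exists_injective_of_card_fiber_le D (fun d => d.fst) (fun d => d.snd)
    (by omega) (fun v => (hout v).ge) fun v => (hbal v ▸ hout v).le
  choose d hdD hdfst hdsnd using hfD
  have hadj : ∀ v, G.Adj v (f v) := fun v => by simpa only [hdfst, hdsnd] using (d v).adj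
  have hf2 : ∀ v, f (f v) ≠ v := fun v h => by
    have : d (f v) = (d v).symm := by ext <;> simp [hdfst, hdsnd, h]
    exact (hD (d v)).1 (this ▸ hdD (f v)) (hdD v)
  refine ⟨SimpleGraph.fromRel fun v w => f v = w, fun v w hvw => ?_,
    SimpleGraph.card_neighborSet_fromRel_perm_eq_two (.ofBijective f hf.bijective_of_finite) hf2⟩
  obtain ⟨-, rfl | rfl⟩ := (SimpleGraph.fromRel_adj _ _ _).1 hvw
  exacts [hadj v, (hadj w).symm]
end
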